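/- Under Assumption 1, if there exists a nonnegative matrix Y with R_T(Y) ≥ 0, then the fixed-point sequence X_0 = 0, X_{k+1} = S_T⁻¹(X_kᵀ B X_k − C) converges to a matrix X_min that is a solution of R_T(X) = 0 and is minimal among all nonnegative Y with R_T(Y) ≥ 0, i.e., X_min ≤ Y for every such Y. -/

import Mathlib

open Matrix

/-- A real square matrix is a Z-matrix if all its off-diagonal entries are nonpositive. -/
def IsZMatrix {m : Type*} [Fintype m] [DecidableEq m] (A : Matrix m m ℝ) : Prop :=
  ∀ i j, i ≠ j → A i j ≤ 0

/-- A real square matrix is a nonsingular M-matrix if it can be written as `s • 1 - N`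
with `N` entrywise nonnegative and `s` strictly larger than the spectral radius of `N`
(i.e., every complex eigenvalue of `N` has modulus strictly less than `s`). -/
def IsNonsingMMatrix {m : Type*} [Fintype m] [DecidableEq m] (A : Matrix m m ℝ) : Prop :=
  ∃ (s : ℝ) (N : Matrix m m ℝ),
    0 < s ∧ (∀ i j, 0 ≤ N i j) ∧ A = s • (1 : Matrix m m ℝ) - N ∧
    ∀ μ ∈ spectrum ℂ (N.map (algebraMap ℝ ℂ)), ‖μ‖ < s

open Kronecker

/-- The vec-permutation matrix `Π = Σ_{i,j} E_{i,j} ⊗ E_{j,i}`, where `E_{i,j}` is the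
matrix with `(i,j)` entry `1` and zeros elsewhere. -/
def vecPerm (n : ℕ) : Matrix (Fin n × Fin n) (Fin n × Fin n) ℝ :=
  ∑ i : Fin n, ∑ j : Fin n,
    (Matrix.single i j (1 : ℝ)) ⊗ₖ (Matrix.single j i (1 : ℝ))

/-- Column-stacking vectorization: `vecM X (j, i) = X i j`. -/
def vecM {n : ℕ} (X : Matrix (Fin n) (Fin n) ℝ) : Fin n × Fin n → ℝ := fun p => X p.2 p.1

/-!
The map `S(X) = D X + Xᵀ A` is inverse-monotone: vectorized it is the nonsingular M-matrix
`s • 1 - N`, and `S U ≥ 0` gives `v ≥ (s⁻¹ N) v ≥ (s⁻¹ N)² v ≥ ⋯ → 0` for `v = vec U`, since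
`s⁻¹ N` has spectral radius below one (Gelfand's formula). The iteration
`S X_{k+1} = X_kᵀ B X_k - C` has a right-hand side that is monotone on nonnegative matrices, so by
induction `0 ≤ X_k ≤ X_{k+1}` and `X_k ≤ Y` for every nonnegative supersolution `Y`. The
sequence therefore converges entrywise to its supremum, which solves the equation by continuity
and lies below every such `Y`.
-/

open Matrix Filter Topology Kronecker

section BanachAlgebra

variable {A : Type*} [NormedRing A] [NormedAlgebra ℂ A] [CompleteSpace A]

theorem tendsto_pow_atTop_nhds_zero_of_spectralRadius_lt_one {a : A}
    (ha : spectralRadius ℂ a < 1) : Tendsto (fun j : ℕ => a ^ j) atTop (𝓝 0) := by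
  obtain ⟨r, hρr, hr1⟩ := ENNReal.lt_iff_exists_nnreal_btwn.mp ha
  have hgelfand := spectrum.pow_nnnorm_pow_one_div_tendsto_nhds_spectralRadius a
  have hbound : ∀ᶠ j : ℕ in atTop, ‖a ^ j‖ ≤ r ^ j := by
    filter_upwards [hgelfand.eventually_lt_const hρr, eventually_gt_atTop 0] with j hj hj0
    rw [one_div, ENNReal.rpow_inv_lt_iff (by positivity), ENNReal.rpow_natCast] at hj
    exact_mod_cast hj.le
  exact squeeze_zero_norm' hbound
    (tendsto_pow_atTop_nhds_zero_of_lt_one r.2 (by exact_mod_cast hr1))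

theorem tendsto_pow_atTop_nhds_zero_of_forall_spectrum_norm_lt_one {a : A}
    (ha : ∀ z ∈ spectrum ℂ a, ‖z‖ < 1) : Tendsto (fun j : ℕ => a ^ j) atTop (𝓝 0) := by
  cases subsingleton_or_nontrivial A
  · simpa only [Subsingleton.elim _ (0 : A)] using tendsto_const_nhds
  · exact tendsto_pow_atTop_nhds_zero_of_spectralRadius_lt_one <|
      spectrum.spectralRadius_lt_of_forall_lt a fun z hz => by exact_mod_cast ha z hz

end BanachAlgebra

namespace Matrix

section Nonneg

variable {l m n : Type*} [Fintype m]

theorem mulVec_mono_of_nonneg {P : Matrix l m ℝ} (hP : ∀ i j, 0 ≤ P i j) {v w : m → ℝ}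
    (hvw : v ≤ w) : P *ᵥ v ≤ P *ᵥ w := fun i =>
  Finset.sum_le_sum fun j _ => mul_le_mul_of_nonneg_left (hvw j) (hP i j)

theorem mul_nonneg_of_nonneg {P : Matrix l m ℝ} {Q : Matrix m n ℝ} (hP : ∀ i j, 0 ≤ P i j)
    (hQ : ∀ i j, 0 ≤ Q i j) (i : l) (k : n) : 0 ≤ (P * Q) i k :=
  Finset.sum_nonneg fun j _ => mul_nonneg (hP i j) (hQ j k)

theorem pow_nonneg_of_nonneg [DecidableEq m] {P : Matrix m m ℝ} (hP : ∀ i j, 0 ≤ P i j)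
    (k : ℕ) (i j : m) : 0 ≤ (P ^ k) i j := by
  induction k generalizing i j with
  | zero => by_cases h : i = j <;> simp [h]
  | succ k ih => rw [pow_succ]; exact mul_nonneg_of_nonneg ih hP i j

theorem nonneg_of_mulVec_le_self [DecidableEq m] {P : Matrix m m ℝ} (hP : ∀ i j, 0 ≤ P i j)
    (hlim : Tendsto (fun k : ℕ => P ^ k) atTop (𝓝 0)) {v : m → ℝ} (hv : P *ᵥ v ≤ v) :
    0 ≤ v := by
  have hpow (k : ℕ) : P ^ k *ᵥ v ≤ v := by
    induction k with
    | zero => simp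
    | succ k ih =>
      calc P ^ (k + 1) *ᵥ v = P ^ k *ᵥ (P *ᵥ v) := by rw [pow_succ, mulVec_mulVec]
      _ ≤ P ^ k *ᵥ v := mulVec_mono_of_nonneg (pow_nonneg_of_nonneg hP k) hv
      _ ≤ v := ih
  have hlim' : Tendsto (fun k : ℕ => P ^ k *ᵥ v) atTop (𝓝 0) := by
    simpa [Function.comp_def] using
      ((continuous_id.matrix_mulVec (continuous_const (y := v))).tendsto 0).comp hlim
  exact le_of_tendsto' hlim' hpow

theorem transpose_mul_mul_self_mono {B V W : Matrix m m ℝ} (hB : ∀ i j, 0 ≤ B i j)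
    (hV : ∀ i j, 0 ≤ V i j) (hVW : ∀ i j, V i j ≤ W i j) (i j : m) :
    (Vᵀ * B * V) i j ≤ (Wᵀ * B * W) i j := by
  have hW i j : 0 ≤ W i j := (hV i j).trans (hVW i j)
  simp only [mul_apply, transpose_apply]
  gcongr with k _ l _ <;>
    first
    | exact hB .. | exact hV .. | exact hVW ..
    | exact Finset.sum_nonneg fun l _ => mul_nonneg (hW l i) (hB l k)

end Nonneg

theorem tendsto_pow_smul_atTop_nhds_zero {m : Type*} [Fintype m] [DecidableEq m] {N : Matrix m m ℝ} {s : ℝ} (hs : 0 < s)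
    (hN : ∀ μ ∈ spectrum ℂ (N.map (algebraMap ℝ ℂ)), ‖μ‖ < s) :
    Tendsto (fun j : ℕ => (s⁻¹ • N) ^ j) atTop (𝓝 0) := by
  -- The `L∞` operator norm makes `Matrix m m ℂ` a Banach algebra whose topology is,
  -- definitionally, the product topology used in the statement.
  let _ : NormedRing (Matrix m m ℂ) := Matrix.linftyOpNormedRing
  let _ : NormedAlgebra ℂ (Matrix m m ℂ) := Matrix.linftyOpNormedAlgebra
  have hmap (j : ℕ) :
      (s⁻¹ • N) ^ j = (((s⁻¹ • N).map (algebraMap ℝ ℂ)) ^ j).map Complex.re := by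
    rw [← RingHom.mapMatrix_apply, ← map_pow]
    ext i k
    simp
  have hspec : ∀ z ∈ spectrum ℂ ((s⁻¹ • N).map (algebraMap ℝ ℂ)), ‖z‖ < 1 := by
    have hs' : (s : ℂ)⁻¹ ≠ 0 := by simpa using hs.ne'
    have hsmul : (s⁻¹ • N).map (algebraMap ℝ ℂ) = Units.mk0 _ hs' • N.map (algebraMap ℝ ℂ) := by
      ext i k
      simp
    rw [hsmul, spectrum.unit_smul_eq_smul]
    rintro _ ⟨μ, hμ, rfl⟩
    dsimp only
    rw [smul_eq_mul, norm_mul, Units.val_mk0, norm_inv, Complex.norm_real,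
      Real.norm_of_nonneg hs.le]
    exact (inv_mul_lt_one₀ hs).mpr (hN μ hμ)
  have hre : Tendsto (fun M : Matrix m m ℂ => M.map Complex.re) (𝓝 0) (𝓝 0) := by
    simpa using (continuous_id.matrix_map Complex.continuous_re).tendsto 0
  simp_rw [hmap]
  exact hre.comp (tendsto_pow_atTop_nhds_zero_of_forall_spectrum_norm_lt_one hspec)

theorem tendsto_of_monotone_of_le {m n : Type*} {X : ℕ → Matrix m n ℝ}
    (hmono : ∀ k i j, X k i j ≤ X (k + 1) i j) {Y : Matrix m n ℝ}
    (hY : ∀ k i j, X k i j ≤ Y i j) :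
    Tendsto X atTop (𝓝 (of fun i j => ⨆ k, X k i j)) :=
  tendsto_pi_nhds.2 fun i => tendsto_pi_nhds.2 fun j =>
    tendsto_atTop_ciSup (monotone_nat_of_le_succ fun k => hmono k i j)
      ⟨Y i j, by rintro _ ⟨k, rfl⟩; exact hY k i j⟩

end Matrix

theorem IsNonsingMMatrix.nonneg_of_mulVec_nonneg {m : Type*} [Fintype m] [DecidableEq m]
    {M : Matrix m m ℝ} (hM : IsNonsingMMatrix M) {v : m → ℝ} (hv : 0 ≤ M *ᵥ v) : 0 ≤ v := by
  obtain ⟨s, N, hs, hN, rfl, hspec⟩ := hM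
  refine nonneg_of_mulVec_le_self (fun i j => ?_) (tendsto_pow_smul_atTop_nhds_zero hs hspec) ?_
  · simpa using mul_nonneg (inv_nonneg.2 hs.le) (hN i j)
  · have : v - (s⁻¹ • N) *ᵥ v = s⁻¹ • ((s • 1 - N) *ᵥ v) := by
      rw [sub_mulVec, smul_mulVec, smul_mulVec, one_mulVec, smul_sub, smul_smul,
        inv_mul_cancel₀ hs.ne', one_smul]
    exact sub_nonneg.1 (this ▸ smul_nonneg (inv_nonneg.2 hs.le) hv)

section Vectorization

variable {n : ℕ}

theorem vecPerm_mulVec_vec (U : Matrix (Fin n) (Fin n) ℝ) : vecPerm n *ᵥ vec U = vec Uᵀ := by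
  simp only [vecPerm, sum_mulVec, kronecker_mulVec_vec, transpose_single, single_mul_mul_single,
    one_mul, mul_one, ← vec_sum]
  rw [Finset.sum_comm]
  exact congrArg vec (matrix_eq_sum_single Uᵀ).symm

theorem mulVec_vec_mul_add_transpose_mul (A D U : Matrix (Fin n) (Fin n) ℝ) :
    (1 ⊗ₖ D + (Aᵀ ⊗ₖ 1) * vecPerm n) *ᵥ vec U = vec (D * U + Uᵀ * A) := by
  rw [add_mulVec, ← mulVec_mulVec, vecPerm_mulVec_vec, kronecker_mulVec_vec, kronecker_mulVec_vec,
    transpose_one, transpose_transpose, Matrix.mul_one, Matrix.one_mul, vec_add]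

theorem le_of_mul_add_transpose_mul_le {A D : Matrix (Fin n) (Fin n) ℝ}
    (hM : IsNonsingMMatrix (1 ⊗ₖ D + (Aᵀ ⊗ₖ 1) * vecPerm n)) (U V : Matrix (Fin n) (Fin n) ℝ)
    (h : ∀ i j, (D * U + Uᵀ * A) i j ≤ (D * V + Vᵀ * A) i j) (i j : Fin n) : U i j ≤ V i j := by
  have hS : D * (V - U) + (V - U)ᵀ * A = (D * V + Vᵀ * A) - (D * U + Uᵀ * A) := by
    rw [Matrix.mul_sub, transpose_sub, Matrix.sub_mul]
    abel
  have hnonneg := hM.nonneg_of_mulVec_nonneg (v := vec (V - U)) <| by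
    rw [mulVec_vec_mul_add_transpose_mul, hS]
    exact fun p => sub_nonneg.2 (h p.2 p.1)
  exact sub_nonneg.1 (hnonneg (j, i))

end Vectorization

section RiccatiIteration

variable {m : Type*} [Fintype m] {A B C D : Matrix m m ℝ} {X : ℕ → Matrix m m ℝ}

theorem riccati_iterate_nonneg (hB : ∀ i j, 0 ≤ B i j) (hC : ∀ i j, C i j ≤ 0)
    (hS : ∀ U V : Matrix m m ℝ, (∀ i j, (D * U + Uᵀ * A) i j ≤ (D * V + Vᵀ * A) i j) →
      ∀ i j, U i j ≤ V i j)
    (hX0 : X 0 = 0) (hrec : ∀ k, D * X (k + 1) + (X (k + 1))ᵀ * A = (X k)ᵀ * B * X k - C)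
    (k : ℕ) (i j : m) : 0 ≤ X k i j := by
  induction k generalizing i j with
  | zero => simp [hX0]
  | succ k ih =>
    refine hS 0 _ (fun i j => ?_) i j
    have hquad := transpose_mul_mul_self_mono (V := 0) hB (fun _ _ => le_rfl) ih i j
    rw [hrec]
    simp only [Matrix.mul_zero, transpose_zero, Matrix.zero_mul, add_zero, Matrix.zero_apply,
      Matrix.sub_apply] at hquad ⊢
    linarith [hC i j]

theorem riccati_iterate_monotone (hB : ∀ i j, 0 ≤ B i j)
    (hS : ∀ U V : Matrix m m ℝ, (∀ i j, (D * U + Uᵀ * A) i j ≤ (D * V + Vᵀ * A) i j) →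
      ∀ i j, U i j ≤ V i j)
    (hX0 : X 0 = 0) (hrec : ∀ k, D * X (k + 1) + (X (k + 1))ᵀ * A = (X k)ᵀ * B * X k - C)
    (hnonneg : ∀ k i j, 0 ≤ X k i j) (k : ℕ) (i j : m) : X k i j ≤ X (k + 1) i j := by
  induction k generalizing i j with
  | zero => simpa [hX0] using hnonneg 1 i j
  | succ k ih =>
    refine hS _ _ (fun i j => ?_) i j
    rw [hrec, hrec, Matrix.sub_apply, Matrix.sub_apply]
    exact sub_le_sub_right (transpose_mul_mul_self_mono hB (hnonneg k) ih i j) _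

theorem riccati_iterate_le_of_supersolution (hB : ∀ i j, 0 ≤ B i j)
    (hS : ∀ U V : Matrix m m ℝ, (∀ i j, (D * U + Uᵀ * A) i j ≤ (D * V + Vᵀ * A) i j) →
      ∀ i j, U i j ≤ V i j)
    (hX0 : X 0 = 0) (hrec : ∀ k, D * X (k + 1) + (X (k + 1))ᵀ * A = (X k)ᵀ * B * X k - C)
    (hnonneg : ∀ k i j, 0 ≤ X k i j) (Z : Matrix m m ℝ) (hZ : ∀ i j, 0 ≤ Z i j)
    (hRZ : ∀ i j, 0 ≤ (D * Z + Zᵀ * A - Zᵀ * B * Z + C) i j) (k : ℕ) (i j : m) :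
    X k i j ≤ Z i j := by
  induction k generalizing i j with
  | zero => simpa [hX0] using hZ i j
  | succ k ih =>
    refine hS _ _ (fun i j => ?_) i j
    have hquad := transpose_mul_mul_self_mono hB (hnonneg k) ih i j
    have hRZij := hRZ i j
    rw [hrec]
    simp only [Matrix.add_apply, Matrix.sub_apply] at hRZij ⊢
    linarith

theorem riccati_eq_zero_of_tendsto {L : Matrix m m ℝ} (hX : Tendsto X atTop (𝓝 L))
    (hrec : ∀ k, D * X (k + 1) + (X (k + 1))ᵀ * A = (X k)ᵀ * B * X k - C) :
    D * L + Lᵀ * A - Lᵀ * B * L + C = 0 := by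
  have hlhs : Tendsto (fun k => (X k)ᵀ * B * X k - C) atTop (𝓝 (D * L + Lᵀ * A)) := by
    simp_rw [← hrec]
    exact ((by fun_prop : Continuous fun U : Matrix m m ℝ => D * U + Uᵀ * A).tendsto L).comp
      (hX.comp (tendsto_add_atTop_nat 1))
  have hrhs : Tendsto (fun k => (X k)ᵀ * B * X k - C) atTop (𝓝 (Lᵀ * B * L - C)) :=
    ((by fun_prop : Continuous fun U : Matrix m m ℝ => Uᵀ * B * U - C).tendsto L).comp hX
  rw [tendsto_nhds_unique hlhs hrhs]
  abel

end RiccatiIteration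

/-- Under Assumption 1, if some nonnegative `Y` satisfies `R_T(Y) ≥ 0` entrywise, then
the fixed-point sequence `X 0 = 0`, `D * X (k+1) + (X (k+1))ᵀ * A = (X k)ᵀ * B * X k - C`
converges to a matrix `Xmin` solving `R_T(Xmin) = 0` which is minimal among all
nonnegative supersolutions. -/
theorem fixedPoint_tendsto_minimal_solution
    {n : ℕ} (A B C D : Matrix (Fin n) (Fin n) ℝ)
    (hB : ∀ i j, 0 ≤ B i j) (hC : ∀ i j, C i j ≤ 0)
    (hM : IsNonsingMMatrix
      ((1 : Matrix (Fin n) (Fin n) ℝ) ⊗ₖ D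
        + (Aᵀ ⊗ₖ (1 : Matrix (Fin n) (Fin n) ℝ)) * vecPerm n))
    (Y : Matrix (Fin n) (Fin n) ℝ) (hY : ∀ i j, 0 ≤ Y i j)
    (hRY : ∀ i j, 0 ≤ (D * Y + Yᵀ * A - Yᵀ * B * Y + C) i j)
    (X : ℕ → Matrix (Fin n) (Fin n) ℝ) (hX0 : X 0 = 0)
    (hrec : ∀ k, D * X (k + 1) + (X (k + 1))ᵀ * A = (X k)ᵀ * B * X k - C) :
    ∃ Xmin : Matrix (Fin n) (Fin n) ℝ,
      Filter.Tendsto X Filter.atTop (nhds Xmin) ∧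
      D * Xmin + Xminᵀ * A - Xminᵀ * B * Xmin + C = 0 ∧
      ∀ Z : Matrix (Fin n) (Fin n) ℝ, (∀ i j, 0 ≤ Z i j) →
        (∀ i j, 0 ≤ (D * Z + Zᵀ * A - Zᵀ * B * Z + C) i j) →
        ∀ i j, Xmin i j ≤ Z i j := by
  have hS := le_of_mul_add_transpose_mul_le hM
  have hnonneg := riccati_iterate_nonneg hB hC hS hX0 hrec
  have hbound := riccati_iterate_le_of_supersolution hB hS hX0 hrec hnonneg
  have hlim := tendsto_of_monotone_of_le (riccati_iterate_monotone hB hS hX0 hrec hnonneg)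
    (hbound Y hY hRY)
  exact ⟨_, hlim, riccati_eq_zero_of_tendsto hlim hrec,
    fun Z hZ hRZ i j => ciSup_le fun k => hbound Z hZ hRZ k i j⟩
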